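/- In the geometric realization of a connected simply connected Cartan graph 𝒞 with real root system, let T₀ = ⋃_{b∈A} K^b and let T be the convex hull of T₀. Then T = ⋃_{x,y∈T₀} [x,y]; that is, the union of all closed segments between points of T₀ is already convex and equals the convex hull. -/

import Mathlib

/-
Let `T₀` be the union of the open chambers `K^c`; it is open. Two facts give the theorem.

First, every segment `[p, q]` between chamber points lies in the closure of `T₀`. Walk from `p`
towards `q`: if the segment leaves the closed chamber of `c`, it does so through a wall
`ker β^c_k` whose root `β^c_k` separates `c` from the chamber `d` of `q`. The chamber across that
wall is separated from `d` by exactly the roots separating `c` from `d` other than `β^c_k`, so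
induction on the (finite) number of separating roots applies to the rest of the segment.

Second, if an open set `s` contains every segment between its points in its closure, then the
union `J` of these segments is convex. Indeed `a • x + b • w` with `x ∈ s`, `w ∈ closure s` and
`a > 0` equals `a • x' + b • w'` for some `w' ∈ s` close to `w` and `x' = x + (b / a) • (w - w')`,
still in `s`; hence the join of `s` with `J` is `J`, and by associativity of joins so is the join
of `J` with itself.
-/

open Set

noncomputable section

section Arrangements

variable {V : Type*} [AddCommGroup V] [Module ℝ V] [TopologicalSpace V]

/-- The kernel of a linear functional, as a subset of `V`. -/
def dualKer (α : Module.Dual ℝ V) : Set V := {v | α v = 0}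

/-- A linear hyperplane: the kernel of a nonzero linear functional. -/
def IsLinearHyperplane (H : Set V) : Prop :=
  ∃ α : Module.Dual ℝ V, α ≠ 0 ∧ H = dualKer α

/-- A hyperplane arrangement `(𝒜, T)`: `T` is an open convex cone, `𝒜` a set of linear
hyperplanes, each meeting `T`, which is locally finite in `T`. -/
structure IsHyperplaneArrangement (𝒜 : Set (Set V)) (T : Set V) : Prop where
  T_nonempty : T.Nonempty
  T_open : IsOpen T
  T_convex : Convex ℝ T
  T_cone : ∀ x ∈ T, ∀ c : ℝ, 0 < c → c • x ∈ T
  hyperplanes : ∀ H ∈ 𝒜, IsLinearHyperplane H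
  meets : ∀ H ∈ 𝒜, (H ∩ T).Nonempty
  locallyFinite : ∀ x ∈ T, ∃ U : Set V, IsOpen U ∧ x ∈ U ∧ U ⊆ T ∧
    {H ∈ 𝒜 | (H ∩ U).Nonempty}.Finite

/-- The chambers: connected components of `T \ ⋃ 𝒜`. -/
def chambersOf (𝒜 : Set (Set V)) (T : Set V) : Set (Set V) :=
  {K | ∃ x ∈ T \ ⋃₀ 𝒜, K = connectedComponentIn (T \ ⋃₀ 𝒜) x}

/-- `H` is a wall of the chamber `K`: a hyperplane missing `K` such that
`H ∩ cl(K)` spans `H`. -/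
def IsWall (K H : Set V) : Prop :=
  IsLinearHyperplane H ∧ H ∩ K = ∅ ∧
    (Submodule.span ℝ (H ∩ closure K) : Set V) = H

/-- An open simplicial cone: `⋂_{α ∈ B} α⁻¹(ℝ_{>0})` for a basis `B` of the dual space. -/
def IsOpenSimplicialCone (K : Set V) : Prop :=
  ∃ b : Module.Basis (Fin (Module.finrank ℝ V)) ℝ (Module.Dual ℝ V),
    K = {v | ∀ i, 0 < b i v}

/-- A Tits arrangement: a hyperplane arrangement all of whose chambers are open simplicial
cones (simplicial) and such that every wall of every chamber belongs to `𝒜` (thin). -/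
structure IsTitsArrangement (𝒜 : Set (Set V)) (T : Set V) extends
    IsHyperplaneArrangement 𝒜 T : Prop where
  simplicial : ∀ K ∈ chambersOf 𝒜 T, IsOpenSimplicialCone K
  thin : ∀ K ∈ chambersOf 𝒜 T, ∀ H : Set V, IsWall K H → H ∈ 𝒜

/-- `R` is a root system with associated arrangement `𝒜`: `0 ∉ R`, `R = -R` and
`𝒜 = {ker α | α ∈ R}`. -/
def IsAssociatedRootSystem (𝒜 : Set (Set V)) (R : Set (Module.Dual ℝ V)) : Prop :=
  (0 : Module.Dual ℝ V) ∉ R ∧ (∀ α ∈ R, -α ∈ R) ∧ 𝒜 = {H | ∃ α ∈ R, H = dualKer α}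

/-- The root basis `B^K` of a chamber `K`. -/
def rootBasisOf (R : Set (Module.Dual ℝ V)) (K : Set V) : Set (Module.Dual ℝ V) :=
  {α ∈ R | IsWall K (dualKer α) ∧ ∀ x ∈ K, 0 < α x}

/-- `β` is a non-negative real linear combination of elements of `B`. -/
def InNNRealSpan (B : Set (Module.Dual ℝ V)) (β : Module.Dual ℝ V) : Prop :=
  ∃ (s : Finset (Module.Dual ℝ V)) (c : Module.Dual ℝ V → ℝ),
    ↑s ⊆ B ∧ (∀ α ∈ s, 0 ≤ c α) ∧ β = ∑ α ∈ s, c α • α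

/-- `β` is a non-negative integral linear combination of elements of `B`. -/
def InNatSpan (B : Set (Module.Dual ℝ V)) (β : Module.Dual ℝ V) : Prop :=
  ∃ (s : Finset (Module.Dual ℝ V)) (c : Module.Dual ℝ V → ℕ),
    ↑s ⊆ B ∧ β = ∑ α ∈ s, (c α : ℝ) • α

/-- `β` is an integral linear combination of elements of `B`. -/
def InIntSpan (B : Set (Module.Dual ℝ V)) (β : Module.Dual ℝ V) : Prop :=
  ∃ (s : Finset (Module.Dual ℝ V)) (c : Module.Dual ℝ V → ℤ),
    ↑s ⊆ B ∧ β = ∑ α ∈ s, (c α : ℝ) • α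

/-- The crystallographic property: `R ⊆ ±∑_{α ∈ B^K} ℕ₀ α` for every chamber `K`. -/
def IsCrystallographic (𝒜 : Set (Set V)) (T : Set V) (R : Set (Module.Dual ℝ V)) : Prop :=
  ∀ K ∈ chambersOf 𝒜 T, ∀ β ∈ R,
    InNatSpan (rootBasisOf R K) β ∨ InNatSpan (rootBasisOf R K) (-β)

/-- The chamber complex `𝒮(𝒜,T)`. -/
def chamberComplexOf (𝒜 : Set (Set V)) (T : Set V) : Set (Set V) :=
  {S | ∃ K ∈ chambersOf 𝒜 T, ∃ W : Set (Set V),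
    (∀ H ∈ W, IsWall K H) ∧ S = closure K ∩ ⋂₀ W}

/-- `(𝒜,T)` is `k`-spherical: every simplex of the chamber complex of codimension `k`
meets `T`. -/
def IsKSpherical (𝒜 : Set (Set V)) (T : Set V) (k : ℕ) : Prop :=
  ∀ S ∈ chamberComplexOf 𝒜 T,
    Module.finrank ℝ (Submodule.span ℝ S) = Module.finrank ℝ V - k → (S ∩ T).Nonempty

/-- A reduced root system: `R ∩ ℝα = {±α}` for every `α ∈ R`. -/
def IsReducedRS (R : Set (Module.Dual ℝ V)) : Prop :=
  ∀ α ∈ R, {β ∈ R | ∃ c : ℝ, β = c • α} = {α, -α}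

/-- The hyperplane `H` separates `K` and `K'`. -/
def SeparatesH (H K K' : Set V) : Prop :=
  ∃ α : Module.Dual ℝ V, H = dualKer α ∧ (∀ x ∈ K, 0 < α x) ∧ ∀ x ∈ K', α x < 0

/-- The set `S(K,K')` of hyperplanes of `𝒜` separating `K` and `K'`. -/
def sepSet (𝒜 : Set (Set V)) (K K' : Set V) : Set (Set V) :=
  {H ∈ 𝒜 | SeparatesH H K K'}

/-- The reduction of a set of functionals: the shortest elements on each line. -/
def reducedOf (S : Set (Module.Dual ℝ V)) : Set (Module.Dual ℝ V) :=
  {β ∈ S | ∀ γ ∈ S, ∀ c : ℝ, γ = c • β → 1 ≤ |c|}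

end Arrangements

/-- The standard real vector space `ℝ^r`. -/
abbrev Vr (r : ℕ) : Type := Fin r → ℝ
section CartanGraphs

/-- A generalized Cartan matrix. -/
def IsGCM {I : Type*} (C : Matrix I I ℤ) : Prop :=
  (∀ i, C i i = 2) ∧ (∀ i j, i ≠ j → C i j ≤ 0) ∧
    ∀ i j, i ≠ j → C i j = 0 → C j i = 0

variable {I A : Type*} [Fintype I] [DecidableEq I]

/-- The reflection `σ_i` attached to a generalized Cartan matrix, acting on `ℤ^I`;
on the standard basis it is `σ_i(α_j) = α_j - c_{ij} α_i`. -/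
def gcmSigma (C : Matrix I I ℤ) (i : I) : (I → ℤ) → (I → ℤ) :=
  fun v k => v k - if k = i then ∑ j, C i j * v j else 0

/-- `WeylHom ρ C a b f` : `f` is a morphism from `a` to `b` of the Weyl groupoid of the
Cartan graph `(I, A, ρ, C)`, i.e. a composite of maps `σ_i^c ∈ Hom(c, ρ_i(c))`. -/
inductive WeylHom (ρ : I → A → A) (C : A → Matrix I I ℤ) :
    A → A → ((I → ℤ) → (I → ℤ)) → Prop
  | id (a : A) : WeylHom ρ C a a _root_.id
  | comp {a b : A} {f : (I → ℤ) → (I → ℤ)} (i : I) :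
      WeylHom ρ C a b f → WeylHom ρ C a (ρ i b) (gcmSigma (C b) i ∘ f)

/-- The axioms of a Cartan graph: `A` nonempty, all `C^a` generalized Cartan matrices,
(C1) each `ρ_i` an involution, (C2) `c^a_{ij} = c^{ρ_i(a)}_{ij}`. -/
def IsCartanGraph (ρ : I → A → A) (C : A → Matrix I I ℤ) : Prop :=
  Nonempty A ∧ (∀ a, IsGCM (C a)) ∧ (∀ i, Function.Involutive (ρ i)) ∧
    ∀ a i j, C a i j = C (ρ i a) i j

/-- Connectedness: all Hom-sets of the Weyl groupoid are nonempty. -/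
def CGConnected (ρ : I → A → A) (C : A → Matrix I I ℤ) : Prop :=
  ∀ a b : A, ∃ f, WeylHom ρ C a b f

/-- Simple connectedness: `Hom(a,a) = {id}` for every object `a`. -/
def CGSimplyConnected (ρ : I → A → A) (C : A → Matrix I I ℤ) : Prop :=
  ∀ (a : A) (f : (I → ℤ) → (I → ℤ)), WeylHom ρ C a a f → f = _root_.id

/-- The set of real roots at `a`: all images of standard basis vectors under morphisms
into `a`. -/
def realRootsAt (ρ : I → A → A) (C : A → Matrix I I ℤ) (a : A) : Set (I → ℤ) :=
  {v | ∃ (b : A) (f : (I → ℤ) → (I → ℤ)) (j : I), WeylHom ρ C b a f ∧ v = f (Pi.single j 1)}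

/-- A root system of type `𝒞 = (I, A, ρ, C)`: axioms (R1)-(R4). -/
def IsRootSystemOfType (ρ : I → A → A) (C : A → Matrix I I ℤ)
    (R : A → Set (I → ℤ)) : Prop :=
  (∀ a, R a = {v ∈ R a | ∀ i, 0 ≤ v i} ∪ (fun v => -v) '' {v ∈ R a | ∀ i, 0 ≤ v i}) ∧
  (∀ (a : A) (i : I), {v ∈ R a | ∃ n : ℤ, v = n • Pi.single i 1} =
      {Pi.single i 1, -Pi.single i 1}) ∧
  (∀ (a : A) (i : I), gcmSigma (C a) i '' R a = R (ρ i a)) ∧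
  ∀ (a : A) (i j : I), i ≠ j →
    {v ∈ R a | ∃ m n : ℕ, v = (m : ℤ) • Pi.single i 1 + (n : ℤ) • Pi.single j 1}.Finite →
    (ρ i ∘ ρ j)^[{v ∈ R a |
        ∃ m n : ℕ, v = (m : ℤ) • Pi.single i 1 + (n : ℤ) • Pi.single j 1}.ncard] a = a

end CartanGraphs
section GeometricRealization

variable {r : ℕ} {A : Type*}

/-- The map `ψ : ℤ^r → V*` determined by a basis `(β_i)` of `V*`: `ψ(α_i) = β_i`. -/
def psiMap (bβ : Module.Basis (Fin r) ℝ (Module.Dual ℝ (Vr r))) (v : Fin r → ℤ) :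
    Module.Dual ℝ (Vr r) :=
  ∑ i, (v i : ℝ) • bβ i

/-- The open cone `K^b` attached to the (unique) morphism `u ∈ Hom(b,a)`:
`K^b = ⋂_i ψ_b(α_i)^+` where `ψ_b(α_i) = ψ(u(α_i))`. -/
def Kch (bβ : Module.Basis (Fin r) ℝ (Module.Dual ℝ (Vr r)))
    (u : (Fin r → ℤ) → (Fin r → ℤ)) : Set (Vr r) :=
  {x | ∀ i : Fin r, 0 < psiMap bβ (u (Pi.single i 1)) x}

/-- The root system `R = ψ((R^re)^a)` of the geometric realization. -/
def geoR (ρ : Fin r → A → A) (C : A → Matrix (Fin r) (Fin r) ℤ) (a : A)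
    (bβ : Module.Basis (Fin r) ℝ (Module.Dual ℝ (Vr r))) : Set (Module.Dual ℝ (Vr r)) :=
  psiMap bβ '' realRootsAt ρ C a

/-- The arrangement `𝒜 = {ker α | α ∈ R}` of the geometric realization. -/
def geoA (ρ : Fin r → A → A) (C : A → Matrix (Fin r) (Fin r) ℤ) (a : A)
    (bβ : Module.Basis (Fin r) ℝ (Module.Dual ℝ (Vr r))) : Set (Set (Vr r)) :=
  {H | ∃ α ∈ geoR ρ C a bβ, H = dualKer α}

/-- Adjacency of objects `b, c` of the Cartan graph: the corresponding chambers `K^b`, `K^c`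
are distinct and the span of `cl(K^b) ∩ cl(K^c)` is the wall `ker ψ_b(α_i)` for some `i`. -/
def objAdj (ρ : Fin r → A → A) (C : A → Matrix (Fin r) (Fin r) ℤ) (a : A)
    (bβ : Module.Basis (Fin r) ℝ (Module.Dual ℝ (Vr r))) (b c : A) : Prop :=
  ∃ u u' : (Fin r → ℤ) → (Fin r → ℤ), WeylHom ρ C b a u ∧ WeylHom ρ C c a u' ∧
    ∃ i : Fin r, Kch bβ u ≠ Kch bβ u' ∧
      (Submodule.span ℝ (closure (Kch bβ u) ∩ closure (Kch bβ u')) : Set (Vr r)) =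
        dualKer (psiMap bβ (u (Pi.single i 1)))

/-- The gallery distance between the chambers `K^b` and `K^{b'}`: the minimal length of a
gallery from `K^b` to `K^{b'}`. -/
def galleryDist (ρ : Fin r → A → A) (C : A → Matrix (Fin r) (Fin r) ℤ) (a : A)
    (bβ : Module.Basis (Fin r) ℝ (Module.Dual ℝ (Vr r))) (b b' : A) : ℕ :=
  sInf {m : ℕ | ∃ g : ℕ → A, g 0 = b ∧ g m = b' ∧
    ∀ k < m, objAdj ρ C a bβ (g k) (g (k + 1))}

end GeometricRealization


section Segments

variable {𝕜 E : Type*} [Field 𝕜] [LinearOrder 𝕜] [IsStrictOrderedRing 𝕜]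
  [AddCommGroup E] [Module 𝕜 E]

theorem segment_subset_of_mem_segment {x y z : E} {F : Set E} (hz : z ∈ segment 𝕜 x y)
    (hxz : segment 𝕜 x z ⊆ F) (hzy : segment 𝕜 z y ⊆ F) : segment 𝕜 x y ⊆ F := by
  have hz' : z ∈ range (AffineMap.lineMap x y : 𝕜 → E) := by
    rw [segment_eq_image_lineMap] at hz
    exact image_subset_range _ _ hz
  rw [← insert_endpoints_openSegment]
  rintro w (rfl | rfl | hw)
  · exact hxz (left_mem_segment 𝕜 _ _)
  · exact hzy (right_mem_segment 𝕜 _ _)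
  · rcases openSegment_subset_union x y hz' hw with rfl | hw | hw
    · exact hxz (right_mem_segment 𝕜 _ _)
    · exact hxz (openSegment_subset_segment 𝕜 _ _ hw)
    · exact hzy (openSegment_subset_segment 𝕜 _ _ hw)

end Segments

section ConvexJoin

variable {E : Type*} [AddCommGroup E] [Module ℝ E] [TopologicalSpace E]
  [IsTopologicalAddGroup E] [ContinuousSMul ℝ E] {s : Set E}

theorem add_smul_mem_convexJoin_of_mem_closure (hs : IsOpen s) {x w : E} (hx : x ∈ s)
    (hw : w ∈ closure s) {a b : ℝ} (ha : 0 < a) (hb : 0 ≤ b) (hab : a + b = 1) :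
    a • x + b • w ∈ convexJoin ℝ s s := by
  let shift : E → E := fun y => x + (b / a) • (w - y)
  have hshift : shift ⁻¹' s ∈ nhds w :=
    (hs.preimage (by fun_prop)).mem_nhds (by simpa [shift] using hx)
  obtain ⟨w', hw's, hw'⟩ := mem_closure_iff_nhds.mp hw _ hshift
  refine mem_convexJoin.mpr ⟨shift w', hw's, w', hw', a, b, ha.le, hb, hab, ?_⟩
  simp only [shift, smul_add, smul_smul, mul_div_cancel₀ b ha.ne', smul_sub]
  abel

theorem convexJoin_convexJoin_self_subset (hs : IsOpen s)
    (hseg : ∀ x ∈ s, ∀ y ∈ s, segment ℝ x y ⊆ closure s) :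
    convexJoin ℝ s (convexJoin ℝ s s) ⊆ convexJoin ℝ s s := by
  intro z hz
  obtain ⟨x, hx, w, hw, a, b, ha, hb, hab, rfl⟩ := mem_convexJoin.mp hz
  obtain ⟨p, hp, q, hq, hwpq⟩ := mem_convexJoin.mp hw
  rcases ha.eq_or_lt with rfl | ha
  · rw [zero_add] at hab
    simpa [hab] using hw
  · exact add_smul_mem_convexJoin_of_mem_closure hs hx (hseg p hp q hq hwpq) ha hb hab

theorem convex_convexJoin_self_of_isOpen (hs : IsOpen s)
    (hseg : ∀ x ∈ s, ∀ y ∈ s, segment ℝ x y ⊆ closure s) : Convex ℝ (convexJoin ℝ s s) := by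
  refine convex_iff_segment_subset.mpr fun z₁ hz₁ z₂ hz₂ => ?_
  calc segment ℝ z₁ z₂ ⊆ convexJoin ℝ (convexJoin ℝ s s) (convexJoin ℝ s s) :=
        segment_subset_convexJoin hz₁ hz₂
    _ = convexJoin ℝ s (convexJoin ℝ s (convexJoin ℝ s s)) := convexJoin_assoc _ _ _
    _ ⊆ convexJoin ℝ s (convexJoin ℝ s s) :=
        convexJoin_mono_right (convexJoin_convexJoin_self_subset hs hseg)
    _ ⊆ convexJoin ℝ s s := convexJoin_convexJoin_self_subset hs hseg

theorem convexHull_eq_convexJoin_self_of_isOpen (hs : IsOpen s)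
    (hseg : ∀ x ∈ s, ∀ y ∈ s, segment ℝ x y ⊆ closure s) :
    convexHull ℝ s = convexJoin ℝ s s := by
  refine (convexHull_min (fun x hx => ?_) (convex_convexJoin_self_of_isOpen hs hseg)).antisymm ?_
  · exact segment_subset_convexJoin hx hx (left_mem_segment ℝ x x)
  · simpa using convexJoin_subset_convexHull (𝕜 := ℝ) s s

end ConvexJoin

section Cones

variable {ι E : Type*} [AddCommGroup E] [Module ℝ E] (β : ι → Module.Dual ℝ E)

theorem convex_setOf_forall_nonneg : Convex ℝ {x | ∀ k, 0 ≤ β k x} := by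
  simp only [ofPred_forall]
  exact convex_iInter fun k => convex_halfSpace_ge (β k).isLinear 0

theorem setOf_forall_nonneg_subset_closure [TopologicalSpace E] [ContinuousAdd E]
    [ContinuousSMul ℝ E] {x₀ : E} (hx₀ : ∀ k, 0 < β k x₀) :
    {x | ∀ k, 0 ≤ β k x} ⊆ closure {x | ∀ k, 0 < β k x} := by
  intro x hx
  have hlim : Filter.Tendsto (fun ε : ℝ => x + ε • x₀) (nhdsWithin 0 (Ioi 0)) (nhds x) :=
    ((continuous_const.add (continuous_id.smul continuous_const)).tendsto' 0 x
      (by simp)).mono_left nhdsWithin_le_nhds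
  refine mem_closure_of_tendsto hlim (eventually_nhdsWithin_of_forall fun ε hε k => ?_)
  simpa using add_pos_of_nonneg_of_pos (hx k) (mul_pos (mem_Ioi.mp hε) (hx₀ k))

theorem exists_mem_segment_wall [Finite ι] {p q : E} (hp : ∀ k, 0 ≤ β k p)
    (hq : ∃ k, β k q < 0) :
    ∃ z ∈ segment ℝ p q, (∀ m, 0 ≤ β m z) ∧ ∃ k, β k q < 0 ∧ β k z = 0 := by
  classical
  have := Fintype.ofFinite ι
  -- the first wall met when walking from `p` to `q` is where `t_k = β_k p / (β_k p - β_k q)`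
  -- is minimal among the `k` with `β_k q < 0`
  let t : ι → ℝ := fun k => β k p / (β k p - β k q)
  obtain ⟨k, hk, hmin⟩ := Finset.exists_min_image {k | β k q < 0} t
    (by simpa [Finset.Nonempty] using hq)
  simp only [Finset.mem_filter, Finset.mem_univ, true_and] at hk hmin
  have hval : ∀ m, β m q < 0 → β m ((1 - t k) • p + t k • q) = β m p - t k * (β m p - β m q) :=
    fun m _ => by simp only [map_add, map_smul, smul_eq_mul]; ring
  have hpos : 0 < β k p - β k q := by linarith [hp k]
  refine ⟨(1 - t k) • p + t k • q, ⟨1 - t k, t k, ?_, ?_, by ring, rfl⟩, fun m => ?_, k, hk, ?_⟩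
  · rw [sub_nonneg, div_le_one hpos]; linarith
  · exact div_nonneg (hp k) hpos.le
  · by_cases hm : β m q < 0
    · have hmpos : 0 < β m p - β m q := by linarith [hp m]
      rw [hval m hm, sub_nonneg, ← le_div_iff₀ hmpos]
      exact hmin m hm
    · have ht0 : 0 ≤ t k := div_nonneg (hp k) hpos.le
      have ht1 : t k ≤ 1 := by rw [div_le_one hpos]; linarith
      simp only [map_add, map_smul, smul_eq_mul]
      nlinarith [hp m, not_lt.mp hm]
  · rw [hval k hk, div_mul_cancel₀ _ hpos.ne', sub_self]

end Cones

theorem Module.Basis.exists_forall_apply_eq {K V ι : Type*} [Field K] [AddCommGroup V] [Module K V]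
    [FiniteDimensional K V] [Fintype ι] (B : Module.Basis ι K (Module.Dual K V)) (c : ι → K) :
    ∃ x : V, ∀ k, B k x = c k := by
  refine ⟨(Module.evalEquiv K V).symm (∑ j, c j • B.coord j), fun k => ?_⟩
  simp only [Module.apply_evalEquiv_symm_apply, LinearMap.sum_apply, LinearMap.smul_apply,
    Module.Basis.coord_apply, Module.Basis.repr_self, smul_eq_mul]
  rw [Finset.sum_eq_single k (fun j _ hj => by simp [Finsupp.single_eq_of_ne hj]) (by simp)]
  simp

section WeylGroupoid

variable {I A : Type*} [Fintype I] [DecidableEq I] {ρ : I → A → A} {C : A → Matrix I I ℤ}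

theorem gcmSigma_eq (M : Matrix I I ℤ) (i : I) (v : I → ℤ) :
    gcmSigma M i v = v - (∑ j, M i j * v j) • Pi.single i 1 := by
  funext k
  by_cases h : k = i <;> simp [gcmSigma, h]

theorem isLinearMap_gcmSigma (M : Matrix I I ℤ) (i : I) : IsLinearMap ℤ (gcmSigma M i) := by
  constructor
  · intro v w
    simp only [gcmSigma_eq, Pi.add_apply, mul_add, Finset.sum_add_distrib, add_smul]
    abel
  · intro z v
    simp only [gcmSigma_eq, Pi.smul_apply, smul_eq_mul, mul_left_comm _ z, ← Finset.mul_sum,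
      smul_sub, mul_smul]

theorem gcmSigma_single (M : Matrix I I ℤ) (i j : I) :
    gcmSigma M i (Pi.single j 1) = Pi.single j 1 - M i j • Pi.single i 1 := by
  simp [gcmSigma_eq, Pi.single_apply]

theorem gcmSigma_gcmSigma {M : Matrix I I ℤ} {i : I} (h2 : M i i = 2) (v : I → ℤ) :
    gcmSigma M i (gcmSigma M i v) = v := by
  have hs : ∑ j, M i j * gcmSigma M i v j = -∑ j, M i j * v j := by
    simp only [gcmSigma, mul_sub, mul_ite, mul_zero, Finset.sum_sub_distrib,
      Finset.sum_ite_eq', Finset.mem_univ, if_true, h2]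
    ring
  funext k
  simp only [gcmSigma] at hs ⊢
  rw [hs]
  split <;> ring

theorem gcmSigma_congr {M N : Matrix I I ℤ} {i : I} (h : ∀ j, M i j = N i j) :
    gcmSigma M i = gcmSigma N i := by
  funext v k
  simp only [gcmSigma, h]

theorem WeylHom.trans {b c d : A} {f g : (I → ℤ) → (I → ℤ)} (hf : WeylHom ρ C b c f)
    (hg : WeylHom ρ C c d g) : WeylHom ρ C b d (g ∘ f) := by
  induction hg with
  | id => exact hf
  | comp i _ ih => exact ih.comp i

theorem WeylHom.isLinearMap {b c : A} {f : (I → ℤ) → (I → ℤ)} (h : WeylHom ρ C b c f) :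
    IsLinearMap ℤ f := by
  induction h with
  | id => exact ⟨fun _ _ => rfl, fun _ _ => rfl⟩
  | comp i _ ih =>
    exact ⟨fun x y => by simp only [Function.comp_apply, ih.1, (isLinearMap_gcmSigma _ i).1],
      fun z x => by simp only [Function.comp_apply, ih.2, (isLinearMap_gcmSigma _ i).2]⟩

theorem WeylHom.sigma (hCG : IsCartanGraph ρ C) (i : I) (e : A) :
    WeylHom ρ C (ρ i e) e (gcmSigma (C e) i) := by
  have h := (WeylHom.id (ρ := ρ) (C := C) (ρ i e)).comp i
  rwa [hCG.2.2.1 i e, gcmSigma_congr fun j => (hCG.2.2.2 e i j).symm] at h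

theorem WeylHom.exists_inverse (hCG : IsCartanGraph ρ C) {b c : A} {f : (I → ℤ) → (I → ℤ)}
    (h : WeylHom ρ C b c f) :
    ∃ g, WeylHom ρ C c b g ∧ g ∘ f = _root_.id ∧ f ∘ g = _root_.id := by
  induction h with
  | id => exact ⟨_root_.id, WeylHom.id _, rfl, rfl⟩
  | @comp e f₀ i h ih =>
    obtain ⟨g, hg, hgf, hfg⟩ := ih
    have hσ := gcmSigma_gcmSigma ((hCG.2.1 e).1 i)
    refine ⟨g ∘ gcmSigma (C e) i, (WeylHom.sigma hCG i e).trans hg, ?_, ?_⟩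
    · funext x
      simpa [hσ] using congrFun hgf x
    · funext x
      simpa [hσ] using congrArg (gcmSigma (C e) i) (congrFun hfg (gcmSigma (C e) i x))

theorem realRootsAt_map {b c : A} {u : (I → ℤ) → (I → ℤ)} (hu : WeylHom ρ C b c u) {v : I → ℤ}
    (hv : v ∈ realRootsAt ρ C b) : u v ∈ realRootsAt ρ C c := by
  obtain ⟨e, f, j, hf, rfl⟩ := hv
  exact ⟨e, u ∘ f, j, hf.trans hu, rfl⟩

theorem exists_mem_realRootsAt_eq (hCG : IsCartanGraph ρ C) {b c : A}
    {u : (I → ℤ) → (I → ℤ)} (hu : WeylHom ρ C b c u) {w : I → ℤ}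
    (hw : w ∈ realRootsAt ρ C c) : ∃ v ∈ realRootsAt ρ C b, u v = w := by
  obtain ⟨g, hg, -, hug⟩ := hu.exists_inverse hCG
  exact ⟨g w, realRootsAt_map hg hw, congrFun hug w⟩

theorem ne_zero_of_mem_realRootsAt (hRS : IsRootSystemOfType ρ C (realRootsAt ρ C)) {b : A}
    {v : I → ℤ} (hv : v ∈ realRootsAt ρ C b) : v ≠ 0 := by
  intro h0
  obtain ⟨-, -, j, -, -⟩ := id hv
  -- axiom (R2): the only real roots on the line `ℤ α_j` are `± α_j`
  have hline : (0 : I → ℤ) ∈ {v ∈ realRootsAt ρ C b | ∃ n : ℤ, v = n • Pi.single j 1} :=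
    ⟨h0 ▸ hv, 0, by simp⟩
  rw [hRS.2.1 b j] at hline
  rcases hline with h | h <;> simpa using congrFun h j

theorem nonneg_or_nonpos_of_mem_realRootsAt (hRS : IsRootSystemOfType ρ C (realRootsAt ρ C))
    {b : A} {v : I → ℤ} (hv : v ∈ realRootsAt ρ C b) : (∀ i, 0 ≤ v i) ∨ ∀ i, v i ≤ 0 := by
  rw [hRS.1 b] at hv
  rcases hv with ⟨-, hv⟩ | ⟨w, ⟨-, hw⟩, rfl⟩
  · exact .inl hv
  · exact .inr fun i => by simpa using hw i

end WeylGroupoid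

-- A morphism `u ∈ Hom(b, a)` of the Weyl groupoid; its chamber is `K^b = Kch bβ u`.
@[ext]
structure Chamber {I A : Type*} [Fintype I] [DecidableEq I] (ρ : I → A → A)
    (C : A → Matrix I I ℤ) (a : A) where
  obj : A
  mor : (I → ℤ) → (I → ℤ)
  isHom : WeylHom ρ C obj a mor

section GeometricRealization

variable {r : ℕ} {A : Type*} {ρ : Fin r → A → A} {C : A → Matrix (Fin r) (Fin r) ℤ} {a : A}
  (bβ : Module.Basis (Fin r) ℝ (Module.Dual ℝ (Vr r)))

def psiHom : (Fin r → ℤ) →+ Module.Dual ℝ (Vr r) :=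
  AddMonoidHom.mk' (psiMap bβ) fun v w => by
    simp only [psiMap, Pi.add_apply, Int.cast_add, add_smul, Finset.sum_add_distrib]

theorem psiMap_single (k : Fin r) : psiMap bβ (Pi.single k 1) = bβ k := by
  simp [psiMap, Pi.single_apply]

theorem psiMap_neg (v : Fin r → ℤ) : psiMap bβ (-v) = -psiMap bβ v :=
  map_neg (psiHom bβ) v

theorem psiMap_sub (v w : Fin r → ℤ) : psiMap bβ (v - w) = psiMap bβ v - psiMap bβ w :=
  map_sub (psiHom bβ) v w

theorem psiMap_zsmul (z : ℤ) (v : Fin r → ℤ) : psiMap bβ (z • v) = (z : ℝ) • psiMap bβ v := by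
  simp only [psiMap, Pi.smul_apply, smul_eq_mul, Int.cast_mul, Finset.smul_sum, mul_smul]

theorem psiMap_apply_of_isLinearMap {f : (Fin r → ℤ) → (Fin r → ℤ)} (hf : IsLinearMap ℤ f)
    (v : Fin r → ℤ) : psiMap bβ (f v) = ∑ k, (v k : ℝ) • psiMap bβ (f (Pi.single k 1)) := by
  have hfv : f v = ∑ k, v k • f (Pi.single k 1) := by
    conv_lhs => rw [pi_eq_sum_univ' v, ← IsLinearMap.mk'_apply hf, map_sum]
    simp only [map_smul, IsLinearMap.mk'_apply]
  rw [hfv]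
  exact (map_sum (psiHom bβ) _ _).trans (Finset.sum_congr rfl fun k _ => psiMap_zsmul bβ _ _)

def dualLift (f : (Fin r → ℤ) → (Fin r → ℤ)) : Module.Dual ℝ (Vr r) →ₗ[ℝ] Module.Dual ℝ (Vr r) :=
  bβ.constr ℝ fun j => psiMap bβ (f (Pi.single j 1))

theorem dualLift_apply_basis (f : (Fin r → ℤ) → (Fin r → ℤ)) (j : Fin r) :
    dualLift bβ f (bβ j) = psiMap bβ (f (Pi.single j 1)) :=
  bβ.constr_basis ℝ _ j

theorem dualLift_psiMap {f : (Fin r → ℤ) → (Fin r → ℤ)} (hf : IsLinearMap ℤ f) (v : Fin r → ℤ) :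
    dualLift bβ f (psiMap bβ v) = psiMap bβ (f v) := by
  rw [psiMap_apply_of_isLinearMap bβ hf, psiMap, map_sum]
  simp [dualLift]

theorem dualLift_comp {f g : (Fin r → ℤ) → (Fin r → ℤ)} (hg : IsLinearMap ℤ g) :
    dualLift bβ (g ∘ f) = dualLift bβ g ∘ₗ dualLift bβ f :=
  bβ.ext fun j => by
    rw [LinearMap.comp_apply, dualLift_apply_basis, dualLift_apply_basis, dualLift_psiMap bβ hg]
    rfl

theorem dualLift_id : dualLift bβ _root_.id = LinearMap.id :=
  bβ.ext fun j => by simp only [dualLift_apply_basis, id_eq, psiMap_single, LinearMap.id_apply]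

namespace Chamber

variable (c : Chamber ρ C a)

def simpleRoot (k : Fin r) : Module.Dual ℝ (Vr r) := psiMap bβ (c.mor (Pi.single k 1))

def cone : Set (Vr r) := Kch bβ c.mor

theorem mem_cone {x : Vr r} : x ∈ c.cone bβ ↔ ∀ k, 0 < c.simpleRoot bβ k x := Iff.rfl

theorem isOpen_cone : IsOpen (c.cone bβ) := by
  rw [cone, Kch, ofPred_forall]
  exact isOpen_iInter_of_finite fun k =>
    isOpen_lt continuous_const (LinearMap.continuous_of_finiteDimensional _)

theorem cone_nonempty (hCG : IsCartanGraph ρ C) : (c.cone bβ).Nonempty := by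
  obtain ⟨g, hg, hgu, hug⟩ := c.isHom.exists_inverse hCG
  -- `ψ` intertwines `c.mor` with an automorphism of `V*` taking `β_k` to `c.simpleRoot k`
  let e : Module.Dual ℝ (Vr r) ≃ₗ[ℝ] Module.Dual ℝ (Vr r) := .ofLinearMap (dualLift bβ c.mor) (dualLift bβ g)
    (by rw [← dualLift_comp bβ c.isHom.isLinearMap, hug, dualLift_id])
    (by rw [← dualLift_comp bβ hg.isLinearMap, hgu, dualLift_id])
  obtain ⟨x, hx⟩ := (bβ.map e).exists_forall_apply_eq fun _ => 1
  refine ⟨x, (c.mem_cone bβ).mpr fun k => ?_⟩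
  have hk : bβ.map e k = c.simpleRoot bβ k := dualLift_apply_basis bβ c.mor k
  rw [← hk, hx k]
  exact one_pos

def cross (hCG : IsCartanGraph ρ C) (k : Fin r) : Chamber ρ C a :=
  ⟨ρ k c.obj, c.mor ∘ gcmSigma (C c.obj) k, (WeylHom.sigma hCG k c.obj).trans c.isHom⟩

theorem cross_cross (hCG : IsCartanGraph ρ C) (k : Fin r) : (c.cross hCG k).cross hCG k = c := by
  ext1
  · exact hCG.2.2.1 k c.obj
  · funext v
    simp [cross, gcmSigma_congr fun j => (hCG.2.2.2 c.obj k j).symm,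
      gcmSigma_gcmSigma ((hCG.2.1 c.obj).1 k)]

theorem simpleRoot_cross (hCG : IsCartanGraph ρ C) (k m : Fin r) :
    (c.cross hCG k).simpleRoot bβ m = c.simpleRoot bβ m - (C c.obj k m : ℝ) • c.simpleRoot bβ k := by
  simp only [simpleRoot, cross, Function.comp_apply, gcmSigma_single,
    c.isHom.isLinearMap.map_sub, c.isHom.isLinearMap.map_smul, psiMap_sub, psiMap_zsmul]

theorem simpleRoot_cross_self (hCG : IsCartanGraph ρ C) (k : Fin r) :
    (c.cross hCG k).simpleRoot bβ k = -c.simpleRoot bβ k := by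
  rw [simpleRoot_cross, (hCG.2.1 c.obj).1 k]
  module

theorem simpleRoot_mem_geoR (k : Fin r) : c.simpleRoot bβ k ∈ geoR ρ C a bβ :=
  ⟨_, ⟨c.obj, c.mor, k, c.isHom, rfl⟩, rfl⟩

theorem exists_root_eq (hCG : IsCartanGraph ρ C) {α : Module.Dual ℝ (Vr r)}
    (hα : α ∈ geoR ρ C a bβ) : ∃ v ∈ realRootsAt ρ C c.obj, psiMap bβ (c.mor v) = α := by
  obtain ⟨w, hw, rfl⟩ := hα
  obtain ⟨v, hv, rfl⟩ := exists_mem_realRootsAt_eq hCG c.isHom hw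
  exact ⟨v, hv, rfl⟩

theorem psiMap_mor_pos {x : Vr r} (hx : x ∈ c.cone bβ) {v : Fin r → ℤ} (hv0 : ∀ i, 0 ≤ v i)
    (hv : v ≠ 0) : 0 < psiMap bβ (c.mor v) x := by
  rw [psiMap_apply_of_isLinearMap bβ c.isHom.isLinearMap, LinearMap.sum_apply]
  obtain ⟨k, hk⟩ := Function.ne_iff.mp hv
  refine Finset.sum_pos' (fun i _ => ?_) ⟨k, Finset.mem_univ k, ?_⟩
  · exact mul_nonneg (by exact_mod_cast hv0 i) (hx i).le
  · exact mul_pos (by exact_mod_cast (hv0 k).lt_of_ne' hk) (hx k)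

theorem psiMap_mor_neg {x : Vr r} (hx : x ∈ c.cone bβ) {v : Fin r → ℤ} (hv0 : ∀ i, v i ≤ 0)
    (hv : v ≠ 0) : psiMap bβ (c.mor v) x < 0 := by
  have h := c.psiMap_mor_pos bβ hx (v := -v) (fun i => by simpa using hv0 i) (neg_ne_zero.mpr hv)
  rw [c.isHom.isLinearMap.map_neg, psiMap_neg, LinearMap.neg_apply] at h
  linarith

theorem nonneg_of_psiMap_mor_pos (hRS : IsRootSystemOfType ρ C (realRootsAt ρ C)) {v : Fin r → ℤ}
    (hv : v ∈ realRootsAt ρ C c.obj) {x : Vr r} (hx : x ∈ c.cone bβ)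
    (hpos : 0 < psiMap bβ (c.mor v) x) : ∀ i, 0 ≤ v i :=
  (nonneg_or_nonpos_of_mem_realRootsAt hRS hv).resolve_right fun h =>
    (c.psiMap_mor_neg bβ hx h (ne_zero_of_mem_realRootsAt hRS hv)).not_gt hpos

theorem nonpos_of_psiMap_mor_neg (hRS : IsRootSystemOfType ρ C (realRootsAt ρ C)) {v : Fin r → ℤ}
    (hv : v ∈ realRootsAt ρ C c.obj) {x : Vr r} (hx : x ∈ c.cone bβ)
    (hneg : psiMap bβ (c.mor v) x < 0) : ∀ i, v i ≤ 0 :=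
  (nonneg_or_nonpos_of_mem_realRootsAt hRS hv).resolve_left fun h =>
    (c.psiMap_mor_pos bβ hx h (ne_zero_of_mem_realRootsAt hRS hv)).not_gt hneg

theorem root_pos_or_neg (hCG : IsCartanGraph ρ C) (hRS : IsRootSystemOfType ρ C (realRootsAt ρ C))
    {α : Module.Dual ℝ (Vr r)} (hα : α ∈ geoR ρ C a bβ) :
    (∀ x ∈ c.cone bβ, 0 < α x) ∨ ∀ x ∈ c.cone bβ, α x < 0 := by
  obtain ⟨v, hv, rfl⟩ := c.exists_root_eq bβ hCG hα
  rcases nonneg_or_nonpos_of_mem_realRootsAt hRS hv with h | h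
  · exact .inl fun x hx => c.psiMap_mor_pos bβ hx h (ne_zero_of_mem_realRootsAt hRS hv)
  · exact .inr fun x hx => c.psiMap_mor_neg bβ hx h (ne_zero_of_mem_realRootsAt hRS hv)

def Adjacent (hCG : IsCartanGraph ρ C) (c d : Chamber ρ C a) : Prop := ∃ k, d = c.cross hCG k

theorem adjacent_symm (hCG : IsCartanGraph ρ C) {c d : Chamber ρ C a} :
    Adjacent hCG c d → Adjacent hCG d c := by
  rintro ⟨k, rfl⟩
  exact ⟨k, (c.cross_cross hCG k).symm⟩

theorem reflTransGen_adjacent (hCG : IsCartanGraph ρ C) (c d : Chamber ρ C a) :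
    Relation.ReflTransGen (Adjacent hCG) c d := by
  have hchain : ∀ {b e : A} {u : (Fin r → ℤ) → (Fin r → ℤ)} (h : WeylHom ρ C b e u)
      (w : (Fin r → ℤ) → (Fin r → ℤ)) (hw : WeylHom ρ C e a w),
      Relation.ReflTransGen (Adjacent hCG) ⟨e, w, hw⟩ ⟨b, w ∘ u, h.trans hw⟩ := by
    intro b e u h
    induction h with
    | id => exact fun _ _ => .refl
    | @comp e f₀ j h ih =>
      intro w hw
      refine .head ⟨j, ?_⟩ (ih _ (((WeylHom.id e).comp j).trans hw))
      ext1
      · exact (hCG.2.2.1 j e).symm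
      · exact congrArg (w ∘ ·) (gcmSigma_congr fun i => hCG.2.2.2 e j i)
  have : Std.Symm (Adjacent (a := a) hCG) := ⟨fun _ _ => adjacent_symm hCG⟩
  exact (Std.Symm.symm _ _ (hchain c.isHom _root_.id (.id a))).trans (hchain d.isHom _ (.id a))

end Chamber

end GeometricRealization

section SeparatingRoots

variable {r : ℕ} {A : Type*} {ρ : Fin r → A → A} {C : A → Matrix (Fin r) (Fin r) ℤ} {a : A}
  (bβ : Module.Basis (Fin r) ℝ (Module.Dual ℝ (Vr r)))

def sepRoots (c d : Chamber ρ C a) : Set (Module.Dual ℝ (Vr r)) :=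
  {α ∈ geoR ρ C a bβ | (∀ x ∈ c.cone bβ, 0 < α x) ∧ ∀ x ∈ d.cone bβ, α x < 0}

variable (hCG : IsCartanGraph ρ C) (hRS : IsRootSystemOfType ρ C (realRootsAt ρ C))
include hCG

theorem sepRoots_self (c : Chamber ρ C a) : sepRoots bβ c c = ∅ := by
  obtain ⟨x, hx⟩ := c.cone_nonempty bβ hCG
  exact eq_empty_of_forall_notMem fun α ⟨_, hpos, hneg⟩ => (hpos x hx).not_gt (hneg x hx)

include hRS

theorem sepRoots_subset_union (c d e : Chamber ρ C a) :
    sepRoots bβ c d ⊆ sepRoots bβ c e ∪ sepRoots bβ e d := by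
  rintro α ⟨hα, hpos, hneg⟩
  rcases e.root_pos_or_neg bβ hCG hRS hα with h | h
  · exact .inr ⟨hα, h, hneg⟩
  · exact .inl ⟨hα, hpos, h⟩

theorem sepRoots_cross_subset (c : Chamber ρ C a) (k : Fin r) :
    sepRoots bβ c (c.cross hCG k) ⊆ {c.simpleRoot bβ k} := by
  rintro α ⟨hα, hpos, hneg⟩
  obtain ⟨v, hv, rfl⟩ := c.exists_root_eq bβ hCG hα
  obtain ⟨x, hx⟩ := c.cone_nonempty bβ hCG
  obtain ⟨x', hx'⟩ := (c.cross hCG k).cone_nonempty bβ hCG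
  have hv0 := c.nonneg_of_psiMap_mor_pos bβ hRS hv hx (hpos x hx)
  -- `α` is a root `w` of the neighbouring object, negative on its chamber
  set w := gcmSigma (C c.obj) k v
  have hw : w ∈ realRootsAt ρ C (ρ k c.obj) := hRS.2.2.1 c.obj k ▸ mem_image_of_mem _ hv
  have hwv : (c.cross hCG k).mor w = c.mor v :=
    congrArg c.mor (gcmSigma_gcmSigma ((hCG.2.1 c.obj).1 k) v)
  have hw0 := (c.cross hCG k).nonpos_of_psiMap_mor_neg bβ hRS hw hx' (hwv ▸ hneg x' hx')
  -- `v` and `w` agree off `k`, so `v` is a multiple of `α_k`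
  have hvk : v = v k • Pi.single k 1 := funext fun m => by
    by_cases hm : m = k
    · subst hm
      simp
    · have hwm : w m = v m := by simp [w, gcmSigma, hm]
      simp [hm, le_antisymm (hwm ▸ hw0 m) (hv0 m)]
  have hR2 : v ∈ {v ∈ realRootsAt ρ C c.obj | ∃ n : ℤ, v = n • Pi.single k 1} := ⟨hv, _, hvk⟩
  rw [hRS.2.1 c.obj k] at hR2
  rcases hR2 with rfl | rfl
  · rfl
  · simpa using hv0 k

theorem sepRoots_cross_subset_diff {c d : Chamber ρ C a} {k : Fin r}
    (hk : c.simpleRoot bβ k ∈ sepRoots bβ c d) :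
    sepRoots bβ (c.cross hCG k) d ⊆ sepRoots bβ c d \ {c.simpleRoot bβ k} := by
  rintro α ⟨hα, hpos, hneg⟩
  obtain ⟨x', hx'⟩ := (c.cross hCG k).cone_nonempty bβ hCG
  obtain ⟨y, hy⟩ := d.cone_nonempty bβ hCG
  have hkx' : c.simpleRoot bβ k x' < 0 := by
    have := (Chamber.mem_cone bβ _).mp hx' k
    rw [Chamber.simpleRoot_cross_self, LinearMap.neg_apply] at this
    linarith
  refine ⟨⟨hα, ?_, hneg⟩, fun hαk => (hpos x' hx').not_gt (hαk ▸ hkx')⟩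
  refine (c.root_pos_or_neg bβ hCG hRS hα).resolve_right fun hcneg => ?_
  -- otherwise `α` separates `c.cross k` from its neighbour `c`, so `α = -(c.simpleRoot k)`
  have hmem : α ∈ sepRoots bβ (c.cross hCG k) ((c.cross hCG k).cross hCG k) := by
    rw [c.cross_cross hCG k]
    exact ⟨hα, hpos, hcneg⟩
  have hαk := sepRoots_cross_subset bβ hCG hRS _ k hmem
  rw [mem_singleton_iff, Chamber.simpleRoot_cross_self] at hαk
  have := hk.2.2 y hy
  have := hneg y hy
  rw [hαk, LinearMap.neg_apply] at this
  linarith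

theorem sepRoots_finite (c d : Chamber ρ C a) : (sepRoots bβ c d).Finite := by
  induction c.reflTransGen_adjacent hCG d with
  | refl => simp [sepRoots_self bβ hCG]
  | tail _ h ih =>
    obtain ⟨k, rfl⟩ := h
    exact (ih.union (finite_singleton _)).subset ((sepRoots_subset_union bβ hCG hRS _ _ _).trans
      (union_subset_union_right _ (sepRoots_cross_subset bβ hCG hRS _ k)))

theorem ncard_sepRoots_cross_lt {c d : Chamber ρ C a} {k : Fin r}
    (hk : c.simpleRoot bβ k ∈ sepRoots bβ c d) :
    (sepRoots bβ (c.cross hCG k) d).ncard < (sepRoots bβ c d).ncard :=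
  (ncard_le_ncard (sepRoots_cross_subset_diff bβ hCG hRS hk)
    ((sepRoots_finite bβ hCG hRS c d).sdiff)).trans_lt
    (ncard_sdiff_singleton_lt_of_mem hk (sepRoots_finite bβ hCG hRS c d))

end SeparatingRoots

def chamberUnion {r : ℕ} {A : Type*} (ρ : Fin r → A → A) (C : A → Matrix (Fin r) (Fin r) ℤ)
    (a : A) (bβ : Module.Basis (Fin r) ℝ (Module.Dual ℝ (Vr r))) : Set (Vr r) :=
  {x | ∃ (b : A) (u : (Fin r → ℤ) → (Fin r → ℤ)), WeylHom ρ C b a u ∧ x ∈ Kch bβ u}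

section ChamberUnion

variable {r : ℕ} {A : Type*} {ρ : Fin r → A → A} {C : A → Matrix (Fin r) (Fin r) ℤ} {a : A}
  (bβ : Module.Basis (Fin r) ℝ (Module.Dual ℝ (Vr r)))

theorem Chamber.cone_subset_chamberUnion (c : Chamber ρ C a) :
    c.cone bβ ⊆ chamberUnion ρ C a bβ :=
  fun _ hx => ⟨c.obj, c.mor, c.isHom, hx⟩

theorem isOpen_chamberUnion : IsOpen (chamberUnion ρ C a bβ) :=
  isOpen_iff_forall_mem_open.mpr fun _ ⟨b, u, hu, hx⟩ =>
    ⟨_, Chamber.cone_subset_chamberUnion bβ ⟨b, u, hu⟩, Chamber.isOpen_cone bβ _, hx⟩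

variable (hCG : IsCartanGraph ρ C) (hRS : IsRootSystemOfType ρ C (realRootsAt ρ C))
include hCG hRS

theorem segment_subset_closure_chamberUnion_of_nonneg (c d : Chamber ρ C a) {p q : Vr r}
    (hp : ∀ k, 0 ≤ c.simpleRoot bβ k p) (hq : q ∈ d.cone bβ) :
    segment ℝ p q ⊆ closure (chamberUnion ρ C a bβ) := by
  induction hn : (sepRoots bβ c d).ncard using Nat.strong_induction_on generalizing c p with
  | _ n ih =>
  obtain ⟨x₀, hx₀⟩ := c.cone_nonempty bβ hCG
  have hcl : {x | ∀ k, 0 ≤ c.simpleRoot bβ k x} ⊆ closure (chamberUnion ρ C a bβ) :=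
    (setOf_forall_nonneg_subset_closure _ hx₀).trans
      (closure_mono (c.cone_subset_chamberUnion bβ))
  by_cases hqc : ∀ k, 0 ≤ c.simpleRoot bβ k q
  · exact ((convex_setOf_forall_nonneg _).segment_subset hp hqc).trans hcl
  push Not at hqc
  obtain ⟨z, hz, hzc, k, hkq, hkz⟩ := exists_mem_segment_wall _ hp hqc
  have hk : c.simpleRoot bβ k ∈ sepRoots bβ c d :=
    ⟨c.simpleRoot_mem_geoR bβ k, fun x hx => hx k,
      (d.root_pos_or_neg bβ hCG hRS (c.simpleRoot_mem_geoR bβ k)).resolve_left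
        fun h => (h q hq).not_gt hkq⟩
  have hz' : ∀ m, 0 ≤ (c.cross hCG k).simpleRoot bβ m z := fun m => by
    simpa [Chamber.simpleRoot_cross, hkz] using hzc m
  exact segment_subset_of_mem_segment hz
    (((convex_setOf_forall_nonneg _).segment_subset hp hzc).trans hcl)
    (ih _ (hn ▸ ncard_sepRoots_cross_lt bβ hCG hRS hk) _ hz' rfl)

theorem segment_subset_closure_chamberUnion {x y : Vr r} (hx : x ∈ chamberUnion ρ C a bβ)
    (hy : y ∈ chamberUnion ρ C a bβ) : segment ℝ x y ⊆ closure (chamberUnion ρ C a bβ) := by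
  obtain ⟨b, u, hu, hx⟩ := hx
  obtain ⟨b', u', hu', hy⟩ := hy
  exact segment_subset_closure_chamberUnion_of_nonneg bβ hCG hRS ⟨b, u, hu⟩ ⟨b', u', hu'⟩
    (fun k => (hx k).le) hy

end ChamberUnion

theorem statement_14_general {r : ℕ} {A : Type*}
    (ρ : Fin r → A → A) (C : A → Matrix (Fin r) (Fin r) ℤ)
    (hCG : IsCartanGraph ρ C)
    (hRS : IsRootSystemOfType ρ C (realRootsAt ρ C))
    (a : A) (bβ : Module.Basis (Fin r) ℝ (Module.Dual ℝ (Vr r)))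
    :
    convexHull ℝ {x : Vr r | ∃ (b : A) (u : (Fin r → ℤ) → (Fin r → ℤ)),
        WeylHom ρ C b a u ∧ x ∈ Kch bβ u} =
      {z : Vr r |
        ∃ x ∈ {x : Vr r | ∃ (b : A) (u : (Fin r → ℤ) → (Fin r → ℤ)),
          WeylHom ρ C b a u ∧ x ∈ Kch bβ u},
        ∃ y ∈ {x : Vr r | ∃ (b : A) (u : (Fin r → ℤ) → (Fin r → ℤ)),
          WeylHom ρ C b a u ∧ x ∈ Kch bβ u},
        z ∈ segment ℝ x y} :=
  (convexHull_eq_convexJoin_self_of_isOpen (isOpen_chamberUnion bβ)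
    fun _ hx _ hy => segment_subset_closure_chamberUnion bβ hCG hRS hx hy).trans
    (ext fun _ => mem_convexJoin)

/-- in the geometric realization of a connected simply connected Cartan
graph `𝒞` with real root system, let `T₀ = ⋃_{b ∈ A} K^b` and let `T` be the convex hull
of `T₀`.  Then `T = ⋃_{x,y ∈ T₀} [x,y]`: the union of all closed segments between points
of `T₀` is already convex and equals the convex hull. -/
theorem statement_14 {r : ℕ} {A : Type*}
    (ρ : Fin r → A → A) (C : A → Matrix (Fin r) (Fin r) ℤ)
    (hCG : IsCartanGraph ρ C) (hconn : CGConnected ρ C) (hsc : CGSimplyConnected ρ C)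
    (hRS : IsRootSystemOfType ρ C (realRootsAt ρ C))
    (a : A) (bβ : Module.Basis (Fin r) ℝ (Module.Dual ℝ (Vr r)))
    :
    convexHull ℝ {x : Vr r | ∃ (b : A) (u : (Fin r → ℤ) → (Fin r → ℤ)),
        WeylHom ρ C b a u ∧ x ∈ Kch bβ u} =
      {z : Vr r |
        ∃ x ∈ {x : Vr r | ∃ (b : A) (u : (Fin r → ℤ) → (Fin r → ℤ)),
          WeylHom ρ C b a u ∧ x ∈ Kch bβ u},
        ∃ y ∈ {x : Vr r | ∃ (b : A) (u : (Fin r → ℤ) → (Fin r → ℤ)),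
          WeylHom ρ C b a u ∧ x ∈ Kch bβ u},
        z ∈ segment ℝ x y} :=
  statement_14_general ρ C hCG hRS a bβ
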